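/- arXiv:math/0606764 — 5 statements merged into one kernel-verified Lean document; each statement's English description precedes it below -/
import Mathlib

section
/- Let G be a group, H a normal subgroup of finite index r with coset representatives x₁, …, x_r, and φ an automorphism of G with φ(H) = H. For g ∈ G set g_i := x_i g φ(x_i)⁻¹. Then the φ-twisted conjugacy class of g decomposes as {g}_φ = ⋃_{i=1}^r {e}_{τ_{g_i} ∘ φ'} · g_i, where φ' = φ|_H, τ_{g_i}(h) = g_i h g_i⁻¹, and {e}_{ψ} denotes the ψ-twisted conjugacy class of the identity in H, i.e., {h g_i φ(h)⁻¹ g_i⁻¹ : h ∈ H}·g_i. -/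
/-- Decomposition of a twisted conjugacy class over the cosets of a finite-index
normal `φ`-invariant subgroup: `{g}_φ = ⋃ᵢ {e}_{τ_{gᵢ} ∘ φ'} · gᵢ`, where
`gᵢ = xᵢ g φ(xᵢ)⁻¹`, `φ' = φ|_H` and `τ_{gᵢ}` is conjugation by `gᵢ`. -/
theorem twisted_class_decomposition {G : Type*} [Group G] (H : Subgroup G) [H.Normal]
    (r : ℕ) (x : Fin r → G)
    (htrans : ∀ w : G, ∃ i : Fin r, w * (x i)⁻¹ ∈ H)
    (φ : G ≃* G) (hH : ∀ h : G, h ∈ H ↔ φ h ∈ H) (g : G) :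
    {y : G | ∃ w : G, y = w * g * (φ w)⁻¹} =
      ⋃ i : Fin r,
        (fun h : G =>
            (h * ((x i * g * (φ (x i))⁻¹) * (φ h)⁻¹ * (x i * g * (φ (x i))⁻¹)⁻¹)) *
              (x i * g * (φ (x i))⁻¹)) '' (H : Set G) := by
  ext y
  simp only [Set.mem_setOf_eq, Set.mem_iUnion, Set.mem_image, SetLike.mem_coe]
  constructor
  · rintro ⟨w, rfl⟩
    obtain ⟨i, hi⟩ := htrans w
    refine ⟨i, w * (x i)⁻¹, hi, ?_⟩
    simp only [map_mul, map_inv]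
    group
  · rintro ⟨i, h, _, rfl⟩
    refine ⟨h * x i, ?_⟩
    simp only [map_mul]
    group
end

section
/- Let G be a group and φ an automorphism. If for every pair of distinct φ-conjugacy classes there is a homomorphism onto a finite group (intertwining φ with an automorphism of the target) separating them, and the number R(φ) of φ-conjugacy classes is finite, then there is a single homomorphism F from G onto a finite group K and an automorphism φ_K of K with F ∘ φ = φ_K ∘ F such that F separates all φ-conjugacy classes simultaneously (distinct φ-conjugacy classes have disjoint images in K). -/
/-- Two elements `x, y` are `φ`-conjugate iff `y = g * x * (φ g)⁻¹` for some `g`. -/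
def twistedConj {G : Type*} [Group G] (φ : G → G) (x y : G) : Prop :=
  ∃ g : G, y = g * x * (φ g)⁻¹

/-- If every pair of distinct `φ`-conjugacy classes can be separated by a homomorphism
onto a finite group respecting `φ`, and there are only finitely many `φ`-conjugacy
classes, then one single homomorphism onto a finite group, respecting `φ`, separates
all the `φ`-conjugacy classes simultaneously. -/
theorem diagonal_separation {G : Type*} [Group G] (φ : G ≃* G)
    (hfin : ∃ S : Finset G, ∀ g : G, ∃ s ∈ S, twistedConj (φ : G → G) s g)
    (hsep : ∀ x y : G, ¬ twistedConj (φ : G → G) x y →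
      ∃ (K : Type) (_ : Group K) (_ : Finite K) (F : G →* K) (φK : K ≃* K),
        Function.Surjective F ∧ (∀ g : G, F (φ g) = φK (F g)) ∧
        (∀ a b : G, twistedConj (φ : G → G) x a → twistedConj (φ : G → G) y b →
          F a ≠ F b)) :
    ∃ (K : Type) (_ : Group K) (_ : Finite K) (F : G →* K) (φK : K ≃* K),
      Function.Surjective F ∧ (∀ g : G, F (φ g) = φK (F g)) ∧
      (∀ x y : G, ¬ twistedConj (φ : G → G) x y →
        ∀ a b : G, twistedConj (φ : G → G) x a → twistedConj (φ : G → G) y b →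
          F a ≠ F b) := by
  classical
  obtain ⟨S, hS⟩ := hfin
  have hsymm : ∀ x y : G, twistedConj (φ : G → G) x y → twistedConj (φ : G → G) y x := by
    rintro x y ⟨g, rfl⟩
    refine ⟨g⁻¹, ?_⟩
    simp [map_inv, mul_assoc]
  have htrans : ∀ x y z : G, twistedConj (φ : G → G) x y → twistedConj (φ : G → G) y z →
      twistedConj (φ : G → G) x z := by
    rintro x y z ⟨g, rfl⟩ ⟨h, rfl⟩
    refine ⟨h * g, ?_⟩
    simp [map_mul, mul_assoc]
  let ι := {p : S × S // ¬ twistedConj (φ : G → G) (p.1 : G) (p.2 : G)}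
  haveI : Finite ι := inferInstance
  haveI : Fintype ι := Fintype.ofFinite ι
  let n := Fintype.card ι
  let e : Fin n ≃ ι := (Fintype.equivFin ι).symm
  choose K hK hKfin F φK hsurj hcomm hsepF using
    fun p : ι => hsep (p.1.1 : G) (p.1.2 : G) p.2
  letI : ∀ p : ι, Group (K p) := hK
  letI : ∀ p : ι, Finite (K p) := hKfin
  let K0 : Type := ∀ i : Fin n, K (e i)
  letI : Group K0 := inferInstance
  haveI : Finite K0 := inferInstance
  let F0 : G →* K0 := Pi.monoidHom (fun i => F (e i))
  let φ0 : K0 ≃* K0 := MulEquiv.piCongrRight (fun i => φK (e i))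
  have hcomm0 : ∀ g : G, F0 (φ g) = φ0 (F0 g) := by
    intro g
    funext i
    exact hcomm (e i) g
  have hmap : Subgroup.map (φ0 : K0 →* K0) F0.range = F0.range := by
    ext k
    simp only [Subgroup.mem_map, MonoidHom.mem_range]
    constructor
    · rintro ⟨_, ⟨g, rfl⟩, rfl⟩
      exact ⟨φ g, hcomm0 g⟩
    · rintro ⟨g, rfl⟩
      refine ⟨F0 (φ.symm g), ⟨φ.symm g, rfl⟩, ?_⟩
      show φ0 (F0 (φ.symm g)) = F0 g
      rw [← hcomm0]
      simp
  let φKfin : F0.range ≃* F0.range :=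
    (φ0.subgroupMap F0.range).trans (MulEquiv.subgroupCongr hmap)
  refine ⟨F0.range, inferInstance, inferInstance, F0.rangeRestrict, φKfin,
    F0.rangeRestrict_surjective, ?_, ?_⟩
  · intro g
    apply Subtype.ext
    show F0 (φ g) = _
    rw [hcomm0]
    rfl
  · intro x y hxy a b hxa hyb hab
    obtain ⟨s, hsS, hsx⟩ := hS x
    obtain ⟨t, htS, hty⟩ := hS y
    have hst : ¬ twistedConj (φ : G → G) s t := by
      intro h
      exact hxy (htrans x s y (hsymm s x hsx) (htrans s t y h hty))
    let p : ι := ⟨(⟨s, hsS⟩, ⟨t, htS⟩), hst⟩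
    have h0 : F0 a = F0 b := congrArg Subtype.val hab
    have h1 := congrFun h0 (e.symm p)
    have hPa : twistedConj (φ : G → G) ((p.1.1 : G)) a := htrans s x a hsx hxa
    have hPb : twistedConj (φ : G → G) ((p.1.2 : G)) b := htrans t y b hty hyb
    have hep : e (e.symm p) = p := e.apply_symm_apply p
    exact hsepF (e (e.symm p)) a b (by rw [hep]; exact hPa) (by rw [hep]; exact hPb) h1
end

section
/- Let G be a finitely generated infinite periodic group generated by a, b, and let p be prime, such that every element of G is conjugate to a power of a, and a has order p. Then G is simple. -/
/-- Ivanov's group is simple: an infinite group generated by `a, b`, with `a` of prime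
order `p`, in which every element is conjugate to a power of `a`, is simple. -/
theorem ivanov_group_simple {G : Type*} [Group G] [Infinite G] (a b : G) (p : ℕ)
    (hp : p.Prime)
    (hgen : Subgroup.closure ({a, b} : Set G) = ⊤)
    (horder : orderOf a = p)
    (hconj : ∀ g : G, ∃ (h : G) (k : ℤ), g = h * a ^ k * h⁻¹) :
    ∀ N : Subgroup G, N.Normal → N = ⊥ ∨ N = ⊤ := by
  intro N hN
  by_cases hbot : N = ⊥
  · exact Or.inl hbot
  right
  -- get a nontrivial element of N
  obtain ⟨g, hgN, hg1⟩ : ∃ g ∈ N, g ≠ 1 := by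
    by_contra hcon
    push_neg at hcon
    exact hbot (Subgroup.eq_bot_iff_forall N |>.2 hcon)
  obtain ⟨h, k, rfl⟩ := hconj g
  -- a^k ∈ N
  have hak : a ^ k ∈ N := by
    have := hN.conj_mem _ hgN h⁻¹
    simpa [mul_assoc] using this
  have hk1 : a ^ k ≠ 1 := fun h0 => hg1 (by simp [h0])
  -- p does not divide k
  have hap : a ^ (p : ℤ) = 1 := by
    rw [zpow_natCast, ← horder, pow_orderOf_eq_one]
  have hpk : ¬ (p : ℤ) ∣ k := by
    rintro ⟨c, rfl⟩
    exact hk1 (by rw [zpow_mul, hap, one_zpow])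
  -- coprimality and Bezout: a ∈ N
  have hcop : IsCoprime (p : ℤ) k := by
    rw [Int.isCoprime_iff_gcd_eq_one]
    have : ¬ p ∣ k.natAbs := by
      intro hd
      exact hpk (Int.natCast_dvd.mpr hd)
    exact Nat.Coprime.gcd_eq_one ((Nat.Prime.coprime_iff_not_dvd hp).2 this)
  obtain ⟨u, v, huv⟩ := hcop
  have haN : a ∈ N := by
    have : a = (a ^ k) ^ v := by
      calc a = a ^ (u * (p : ℤ) + v * k) := by rw [huv, zpow_one]
      _ = (a ^ (p : ℤ)) ^ u * (a ^ k) ^ v := by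
          rw [zpow_add, mul_comm u, mul_comm v, zpow_mul, zpow_mul]
      _ = (a ^ k) ^ v := by rw [hap, one_zpow, one_mul]
    rw [this]
    exact Subgroup.zpow_mem N hak v
  -- every element is in N
  rw [Subgroup.eq_top_iff']
  intro x
  obtain ⟨h', k', rfl⟩ := hconj x
  exact hN.conj_mem _ (Subgroup.zpow_mem N haN k') h'
end

section
/- Let H be a normal subgroup of G of finite index such that the twisted conjugacy class {e}_ψ of the identity is closed in the profinite topology of G for every automorphism ψ of H of the form h ↦ g φ(h) g⁻¹ restricted to H. If every subgroup of finite index and every coset thereof is closed in the profinite topology, then for any automorphism φ of G with φ(H) = H, the twisted conjugacy class {g}_φ is closed in the profinite topology of G, being a finite union of translates of closed sets. -/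
/-- A subset `S` of a group `G` is closed in the profinite topology: every point
outside `S` has a coset neighbourhood (modulo some finite-index normal subgroup)
disjoint from `S`. -/
def ProfClosed {G : Type*} [Group G] (S : Set G) : Prop :=
  ∀ g : G, g ∉ S → ∃ N : Subgroup G, N.Normal ∧ N.FiniteIndex ∧ ∀ n ∈ N, g * n ∉ S

/-- If `H ◁ G` has finite index, is invariant under the automorphism `φ`, the twisted
conjugacy class of the identity in `H` is closed in the profinite topology of `G` for
every automorphism of `H` of the form `h ↦ g φ(h) g⁻¹`, and finite-index subgroups and
their cosets are closed, then every `φ`-twisted conjugacy class `{g}_φ` is closed in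
the profinite topology of `G`. -/
theorem twisted_class_profinitely_closed {G : Type*} [Group G]
    (H : Subgroup G) [H.Normal] (hfi : H.FiniteIndex)
    (φ : G ≃* G) (hH : ∀ h : G, h ∈ H ↔ φ h ∈ H)
    (hclosed : ∀ g : G, ProfClosed {y : G | ∃ h ∈ H, y = h * (g * φ h * g⁻¹)⁻¹})
    (hcosets : ∀ (U : Subgroup G), U.FiniteIndex → ∀ g : G,
      ProfClosed ((fun u => u * g) '' (U : Set G))) :
    ∀ g : G, ProfClosed {y : G | ∃ w : G, y = w * g * (φ w)⁻¹} := by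
  intro g z hz
  haveI : Finite (G ⧸ H) := H.finite_quotient_of_finiteIndex
  set c : G ⧸ H → G := fun q => q.out * g * (φ q.out)⁻¹ with hc
  have hzq : ∀ q : G ⧸ H,
      z * (c q)⁻¹ ∉ {y : G | ∃ h ∈ H, y = h * (c q * φ h * (c q)⁻¹)⁻¹} := by
    intro q hmem
    obtain ⟨h, hhH, heq⟩ := hmem
    refine hz ⟨h * q.out, ?_⟩
    have : z = (h * (c q * φ h * (c q)⁻¹)⁻¹) * c q := by
      rw [← heq]; group
    rw [this, hc]
    simp only [map_mul]
    group
  choose N hNnorm hNfi hNdisj using fun q => hclosed (c q) _ (hzq q)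
  refine ⟨⨅ q, N q, ⟨fun n hn x => Subgroup.mem_iInf.2 fun q =>
    (hNnorm q).conj_mem n (Subgroup.mem_iInf.1 hn q) x⟩,
    Subgroup.finiteIndex_iInf hNfi, ?_⟩
  intro n hn hzn
  obtain ⟨w, hw⟩ := hzn
  set q : G ⧸ H := QuotientGroup.mk w with hq
  have hxw : q.out⁻¹ * w ∈ H := by
    rw [← QuotientGroup.eq]
    exact QuotientGroup.out_eq' q
  have hhH : w * q.out⁻¹ ∈ H := by
    have := (‹H.Normal› : H.Normal).conj_mem _ hxw w
    simpa [mul_assoc] using this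
  apply hNdisj q (c q * n * (c q)⁻¹)
    ((hNnorm q).conj_mem n (Subgroup.mem_iInf.1 hn q) (c q))
  refine ⟨w * q.out⁻¹, hhH, ?_⟩
  have hgoal : z * (c q)⁻¹ * (c q * n * (c q)⁻¹)
      = (w * q.out⁻¹) * (c q * φ (w * q.out⁻¹) * (c q)⁻¹)⁻¹ := by
    have : z * n = w * g * (φ w)⁻¹ := hw
    rw [hc]
    simp only [map_mul, map_inv]
    calc z * (c q)⁻¹ * (c q * n * (c q)⁻¹) = (z * n) * (c q)⁻¹ := by group
    _ = (w * g * (φ w)⁻¹) * (c q)⁻¹ := by rw [this]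
    _ = _ := by rw [hc]; simp only [map_mul, map_inv]; group
  exact hgoal
end

section
/- If a class of groups is closed under taking semidirect products by ℤ (with respect to any automorphism) and consists of conjugacy separable groups, then for every group G in the class and every automorphism φ of G, any two non-φ-conjugate elements of G can be separated by a homomorphism of G onto a finite group with φ-invariant kernel. -/
section aux
variable {G : Type*} [Group G] (φ : G ≃* G)

lemma tc_refl (x : G) : twistedConj (φ : G → G) x x := ⟨1, by simp⟩

lemma tc_trans {x y z : G} (h1 : twistedConj (φ : G → G) x y)
    (h2 : twistedConj (φ : G → G) y z) : twistedConj (φ : G → G) x z := by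
  obtain ⟨g, rfl⟩ := h1; obtain ⟨g', rfl⟩ := h2
  exact ⟨g' * g, by simp [mul_assoc]⟩

lemma tc_symm {x y : G} (h : twistedConj (φ : G → G) x y) :
    twistedConj (φ : G → G) y x := by
  obtain ⟨g, rfl⟩ := h
  exact ⟨g⁻¹, by simp [mul_assoc]⟩

lemma tc_apply (x : G) : twistedConj (φ : G → G) x (φ x) :=
  ⟨x⁻¹, by simp [mul_assoc]⟩

lemma tc_zpow (n : ℤ) (x : G) :
    twistedConj (φ : G → G) x (((φ : MulAut G) ^ n) x) := by
  induction n using Int.induction_on with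
  | zero => simpa using tc_refl φ x
  | succ k ih =>
      have h1 : (((φ : MulAut G) ^ ((k : ℤ) + 1)) x)
          = φ (((φ : MulAut G) ^ (k : ℤ)) x) := by
        rw [add_comm, zpow_add, zpow_one, MulAut.mul_apply]
      rw [h1]
      exact tc_trans φ ih (tc_apply φ _)
  | pred k ih =>
      have he : (φ : MulAut G) ^ (-(k : ℤ))
          = (φ : MulAut G) ^ (1 + (-(k : ℤ) - 1)) :=
        congrArg (fun n => (φ : MulAut G) ^ n) (by ring)
      have h1 : (((φ : MulAut G) ^ (-(k : ℤ))) x)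
          = φ (((φ : MulAut G) ^ (-(k : ℤ) - 1)) x) := by
        rw [he, zpow_add, zpow_one, MulAut.mul_apply]
      have h3 : twistedConj (φ : G → G) (((φ : MulAut G) ^ (-(k : ℤ) - 1)) x)
          (((φ : MulAut G) ^ (-(k : ℤ))) x) := by
        rw [h1]; exact tc_apply φ _
      exact tc_trans φ ih (tc_symm φ h3)

end aux

/-- If a class of groups is closed under taking semidirect products by `ℤ` and consists
of conjugacy separable groups, then every group in the class is strongly twisted
conjugacy separable: non-`φ`-conjugate elements can be separated by a homomorphism
onto a finite group with `φ`-invariant kernel. -/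
theorem twisted_separability_of_class {C : ∀ (G : Type) [Group G], Prop}
    (hclosed : ∀ (G : Type) [Group G], C G → ∀ φ : G ≃* G,
      C (SemidirectProduct G (Multiplicative ℤ) (zpowersHom (MulAut G) (φ : MulAut G))))
    (hcs : ∀ (G : Type) [Group G], C G → ∀ x y : G, ¬ IsConj x y →
      ∃ (K : Type) (_ : Group K) (_ : Finite K) (F : G →* K),
        Function.Surjective F ∧ ¬ IsConj (F x) (F y)) :
    ∀ (G : Type) [Group G], C G → ∀ (φ : G ≃* G) (x y : G),
      ¬ twistedConj (φ : G → G) x y →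
      ∃ (K : Type) (_ : Group K) (_ : Finite K) (F : G →* K),
        Function.Surjective F ∧ (∀ a : G, F a = 1 → F (φ a) = 1) ∧
        (∀ a b : G, twistedConj (φ : G → G) x a → twistedConj (φ : G → G) y b →
          F a ≠ F b) := by
  intro G _ hG φ x y hxy
  set α := zpowersHom (MulAut G) (φ : MulAut G) with hα
  set Γ := SemidirectProduct G (Multiplicative ℤ) α with hΓ
  set t : Multiplicative ℤ := Multiplicative.ofAdd 1 with ht
  have hαt : ∀ a : G, α t a = φ a := fun a => by
    simp [hα, ht]
  -- twisted-conjugate elements yield conjugate elements of Γ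
  have key : ∀ a b : G, twistedConj (φ : G → G) a b →
      IsConj (⟨a, t⟩ : Γ) (⟨b, t⟩ : Γ) := by
    rintro a b ⟨g, rfl⟩
    rw [isConj_iff]
    refine ⟨SemidirectProduct.inl g, ?_⟩
    have h : (SemidirectProduct.inl g : Γ) * ⟨a, t⟩
        = (⟨g * a * (φ g)⁻¹, t⟩ : Γ) * SemidirectProduct.inl g := by
      ext
      · show g * α 1 a = (g * a * (φ g)⁻¹) * α t g
        simp [hαt, mul_assoc]
      · show (1 : Multiplicative ℤ) * t = t * 1
        simp
    rw [h, mul_inv_cancel_right]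
  -- non twisted-conjugate elements give non-conjugate elements of Γ
  have hnc : ¬ IsConj (⟨x, t⟩ : Γ) (⟨y, t⟩ : Γ) := by
    rintro ⟨c, hc⟩
    apply hxy
    have hc' : (c : Γ) * ⟨x, t⟩ = ⟨y, t⟩ * c := hc
    have hleft : (c : Γ).left * α (c : Γ).right x = y * α t (c : Γ).left :=
      congrArg SemidirectProduct.left hc'
    have hy : y = (c : Γ).left * (((φ : MulAut G) ^ Multiplicative.toAdd (c : Γ).right) x)
        * (φ ((c : Γ).left))⁻¹ := by
      have h2 : α (c : Γ).right x
          = ((φ : MulAut G) ^ Multiplicative.toAdd (c : Γ).right) x := rfl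
      rw [hαt] at hleft
      rw [← h2, hleft]
      simp
    exact tc_trans φ (tc_zpow φ _ x) ⟨(c : Γ).left, hy⟩
  obtain ⟨K, _, _, F, hFsurj, hFnc⟩ := hcs Γ (hclosed G hG φ) _ _ hnc
  -- restrict to G
  set F₀ : G →* K := F.comp (SemidirectProduct.inl) with hF₀
  refine ⟨F₀.range, inferInstance, inferInstance, F₀.rangeRestrict,
    F₀.rangeRestrict_surjective, ?_, ?_⟩
  · intro a ha
    have ha' : F₀ a = 1 := by
      have := congrArg (Subtype.val) ha
      simpa using this
    have hφa : F₀ (φ a) = 1 := by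
      have hconj : (SemidirectProduct.inl (φ a) : Γ)
          = SemidirectProduct.inr t * SemidirectProduct.inl a * SemidirectProduct.inr t⁻¹ := by
        rw [← SemidirectProduct.inl_aut t a, hαt]
      simp only [hF₀, MonoidHom.comp_apply] at ha' ⊢
      rw [hconj]
      simp [ha']
    exact Subtype.ext (by simpa using hφa)
  · intro a b hxa hyb hab
    apply hFnc
    have hab' : F₀ a = F₀ b := congrArg Subtype.val hab
    have hmk : ∀ g : G, (⟨g, t⟩ : Γ) = SemidirectProduct.inl g * SemidirectProduct.inr t := by
      intro g; ext <;> simp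
    have hF : F (⟨a, t⟩ : Γ) = F (⟨b, t⟩ : Γ) := by
      rw [hmk a, hmk b, map_mul, map_mul]
      simp only [hF₀, MonoidHom.comp_apply] at hab'
      rw [hab']
    have h1 : IsConj (F (⟨x, t⟩ : Γ)) (F (⟨a, t⟩ : Γ)) := F.map_isConj (key x a hxa)
    have h2 : IsConj (F (⟨y, t⟩ : Γ)) (F (⟨b, t⟩ : Γ)) := F.map_isConj (key y b hyb)
    exact h1.trans (by rw [hF]; exact h2.symm)
end
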